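/- For the map σ_γ defined from a Dyck path γ of length 2n by σ_γ(i) = i + l_i/2 − h_i (where h_i is the height after the i-th up-step and l_i the length of the excursion started by the i-th up-step), if i < j and the j-th excursion is contained in the i-th excursion then σ_γ(j) < σ_γ(i), and if the two excursions are disjoint then σ_γ(i) < σ_γ(j). -/

import Mathlib

/-- A Dyck path of length `2n`, as a function `ℕ → ℤ`. -/
def IsDyckPathFn (n : ℕ) (γ : ℕ → ℤ) : Prop :=
  γ 0 = 0 ∧ γ (2 * n) = 0 ∧ (∀ x, x ≤ 2 * n → 0 ≤ γ x) ∧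
    (∀ x, x < 2 * n → γ (x + 1) = γ x + 1 ∨ γ (x + 1) = γ x - 1)

/-- The sorted list of positions in `[1, 2n]` reached by an up-step of `γ`. -/
def upPositions (n : ℕ) (γ : ℕ → ℤ) : List ℕ :=
  ((Finset.Icc 1 (2 * n)).filter (fun x => γ x = γ (x - 1) + 1)).sort (· ≤ ·)

/-- `vPos n γ i` is the position just after the `i`-th up-step of `γ`. -/
def vPos (n : ℕ) (γ : ℕ → ℤ) (i : ℕ) : ℕ := (upPositions n γ).getD (i - 1) 0

/-- The height of `γ` just after its `i`-th up-step. -/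
def hgt (n : ℕ) (γ : ℕ → ℤ) (i : ℕ) : ℤ := γ (vPos n γ i)

/-- The length of the excursion of `γ` started by its `i`-th up-step: the least
`l ≥ 1` with `γ (vPos i - 1 + l) = hgt i - 1`. -/
noncomputable def excLen (n : ℕ) (γ : ℕ → ℤ) (i : ℕ) : ℕ :=
  sInf {l : ℕ | 1 ≤ l ∧ γ (vPos n γ i - 1 + l) = hgt n γ i - 1}

/-- The 231-avoiding permutation associated to a Dyck path:
`σ_γ i = i + l_i / 2 - h_i`. -/
noncomputable def perm231 (n : ℕ) (γ : ℕ → ℤ) (i : ℕ) : ℤ :=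
  (i : ℤ) + ((excLen n γ i / 2 : ℕ) : ℤ) - hgt n γ i

/-!
Counting up-steps gives `2 · #{up-steps in [1, x]} = x + γ x`. At `x = v_i` the count is `i`,
and at the two ends of the `i`-th excursion the path has the same level `h_i - 1`, so `l_i` is
even; together, `2 σ(i) = v_i + l_i - h_i`.

If the `j`-th excursion is nested in the `i`-th, it ends no later and, since the path stays at
height `≥ h_i` strictly inside the `i`-th excursion, `h_j > h_i`. If they are disjoint, the path
climbs at most `v_j - 1 - (v_i - 1 + l_i)` between them, so `2 (σ(j) - σ(i)) ≥ l_j > 0`.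
-/
open Finset

theorem exists_eq_of_down_steps_le_one {γ : ℕ → ℤ} {a b : ℕ} {c : ℤ}
    (hstep : ∀ k, a ≤ k → k < b → γ k ≤ γ (k + 1) + 1) (hab : a ≤ b)
    (hb : γ b ≤ c) (ha : c ≤ γ a) : ∃ t, a ≤ t ∧ t ≤ b ∧ γ t = c := by
  induction b, hab using Nat.le_induction with
  | base => exact ⟨a, le_rfl, le_rfl, le_antisymm hb ha⟩
  | succ b hab ih =>
    by_cases hc : γ (b + 1) = c
    · exact ⟨b + 1, by omega, le_rfl, hc⟩
    · have hb' : γ b ≤ c := by have := hstep b hab (by omega); omega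
      obtain ⟨t, hat, htb, ht⟩ := ih (fun k hak hkb => hstep k hak (by omega)) hb'
      exact ⟨t, hat, by omega, ht⟩

theorem le_add_of_up_steps_le_one {γ : ℕ → ℤ} {a b : ℕ}
    (hstep : ∀ k, a ≤ k → k < b → γ (k + 1) ≤ γ k + 1) (hab : a ≤ b) :
    γ b ≤ γ a + (b - a : ℕ) := by
  induction b, hab using Nat.le_induction with
  | base => simp
  | succ b hab ih =>
    have h1 := ih (fun k hak hkb => hstep k hak (by omega))
    have h2 := hstep b hab (by omega)
    push_cast [Nat.sub_add_comm hab]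
    linarith

def upSteps (n : ℕ) (γ : ℕ → ℤ) : Finset ℕ :=
  (Icc 1 (2 * n)).filter (fun x => γ x = γ (x - 1) + 1)

theorem vPos_eq_nth (n : ℕ) (γ : ℕ → ℤ) (i : ℕ) :
    vPos n γ i = Nat.nth (· ∈ upSteps n γ) (i - 1) := by
  have hf : (Set.ofPred (· ∈ upSteps n γ)).Finite := (upSteps n γ).finite_toSet
  rw [Nat.nth_eq_getD_sort hf, Finset.finite_toSet_toFinset]
  rfl

namespace IsDyckPathFn

variable {n : ℕ} {γ : ℕ → ℤ}

theorem succ_le_add_one (hγ : IsDyckPathFn n γ) {k : ℕ} (hk : k < 2 * n) :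
    γ (k + 1) ≤ γ k + 1 := by
  rcases hγ.2.2.2 k hk with h | h <;> omega

theorem le_succ_add_one (hγ : IsDyckPathFn n γ) {k : ℕ} (hk : k < 2 * n) :
    γ k ≤ γ (k + 1) + 1 := by
  rcases hγ.2.2.2 k hk with h | h <;> omega

theorem two_mul_count_upSteps (hγ : IsDyckPathFn n γ) {x : ℕ} (hx : x ≤ 2 * n) :
    2 * (Nat.count (· ∈ upSteps n γ) (x + 1) : ℤ) = x + γ x := by
  induction x with
  | zero => simp [Nat.count_succ, upSteps, hγ.1]
  | succ x ih =>
    rw [Nat.count_succ]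
    rcases hγ.2.2.2 x (by omega) with hup | hdown
    · have : x + 1 ∈ upSteps n γ := by simp [upSteps, hup]; omega
      simp only [this, if_true]
      push_cast
      linarith [ih (by omega)]
    · have : x + 1 ∉ upSteps n γ := by simp [upSteps, hdown]; omega
      simp only [this, if_false]
      push_cast
      linarith [ih (by omega)]

theorem card_upSteps (hγ : IsDyckPathFn n γ) : #(upSteps n γ) = n := by
  have h := hγ.two_mul_count_upSteps le_rfl
  rw [hγ.2.1, Nat.count_eq_card_filter_range, filter_mem_eq_inter,
    inter_eq_right.2 (fun x hx => by simp [upSteps] at hx; simp; omega)] at h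
  omega

theorem sub_one_lt_card_upSteps (hγ : IsDyckPathFn n γ) {i : ℕ} (hi : i ∈ Icc 1 n)
    (hf : (Set.ofPred (· ∈ upSteps n γ)).Finite) : i - 1 < #hf.toFinset := by
  rw [finite_toSet_toFinset, hγ.card_upSteps]
  simp only [mem_Icc] at hi
  omega

theorem vPos_mem_upSteps (hγ : IsDyckPathFn n γ) {i : ℕ} (hi : i ∈ Icc 1 n) :
    vPos n γ i ∈ upSteps n γ := by
  rw [vPos_eq_nth]
  exact Nat.nth_mem _ (hγ.sub_one_lt_card_upSteps hi)

theorem vPos_lt_vPos (hγ : IsDyckPathFn n γ) {i j : ℕ} (hi : i ∈ Icc 1 n)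
    (hj : j ∈ Icc 1 n) (hij : i < j) : vPos n γ i < vPos n γ j := by
  simp only [vPos_eq_nth]
  exact Nat.nth_lt_nth_of_lt_card (upSteps n γ).finite_toSet
    (by simp only [mem_Icc] at hi; omega) (hγ.sub_one_lt_card_upSteps hj _)

theorem vPos_mem_Icc (hγ : IsDyckPathFn n γ) {i : ℕ} (hi : i ∈ Icc 1 n) :
    vPos n γ i ∈ Icc 1 (2 * n) :=
  (mem_filter.1 (hγ.vPos_mem_upSteps hi)).1

theorem hgt_eq (hγ : IsDyckPathFn n γ) {i : ℕ} (hi : i ∈ Icc 1 n) :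
    hgt n γ i = γ (vPos n γ i - 1) + 1 :=
  (mem_filter.1 (hγ.vPos_mem_upSteps hi)).2

theorem two_mul_eq_vPos_add_hgt (hγ : IsDyckPathFn n γ) {i : ℕ} (hi : i ∈ Icc 1 n) :
    2 * (i : ℤ) = vPos n γ i + hgt n γ i := by
  have hcount : Nat.count (· ∈ upSteps n γ) (vPos n γ i + 1) = i := by
    rw [vPos_eq_nth, Nat.count_nth_succ (hγ.sub_one_lt_card_upSteps hi)]
    simp only [mem_Icc] at hi
    omega
  rw [hgt, ← hγ.two_mul_count_upSteps (mem_Icc.1 (hγ.vPos_mem_Icc hi)).2, hcount]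

theorem excLen_spec (hγ : IsDyckPathFn n γ) {i : ℕ} (hi : i ∈ Icc 1 n) :
    1 ≤ excLen n γ i ∧ vPos n γ i - 1 + excLen n γ i ≤ 2 * n ∧
      γ (vPos n γ i - 1 + excLen n γ i) = hgt n γ i - 1 := by
  obtain ⟨hv1, hv2⟩ := mem_Icc.1 (hγ.vPos_mem_Icc hi)
  have hh := hγ.hgt_eq hi
  have hpos := hγ.2.2.1 (vPos n γ i - 1) (by omega)
  obtain ⟨t, hvt, ht, hγt⟩ := exists_eq_of_down_steps_le_one (γ := γ) (b := 2 * n)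
    (c := hgt n γ i - 1) (fun k _ hk => hγ.le_succ_add_one hk) hv2
    (by rw [hγ.2.1]; omega) (by rw [hgt]; omega)
  have hmem : t - (vPos n γ i - 1) ∈
      {l : ℕ | 1 ≤ l ∧ γ (vPos n γ i - 1 + l) = hgt n γ i - 1} :=
    ⟨by omega, by rwa [Nat.add_sub_cancel' (by omega)]⟩
  obtain ⟨hl1, hl2⟩ := Nat.sInf_mem ⟨_, hmem⟩
  exact ⟨hl1, by have := Nat.sInf_le hmem; unfold excLen; omega, hl2⟩

theorem hgt_le_of_lt_excLen (hγ : IsDyckPathFn n γ) {i t : ℕ} (hi : i ∈ Icc 1 n)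
    (ht1 : 1 ≤ t) (ht : t < excLen n γ i) : hgt n γ i ≤ γ (vPos n γ i - 1 + t) := by
  have hv1 := (mem_Icc.1 (hγ.vPos_mem_Icc hi)).1
  have hend := (hγ.excLen_spec hi).2.1
  by_contra! hlt
  obtain ⟨u, hvu, hut, hγu⟩ := exists_eq_of_down_steps_le_one (γ := γ) (a := vPos n γ i)
    (b := vPos n γ i - 1 + t) (c := hgt n γ i - 1)
    (fun k _ hk => hγ.le_succ_add_one (by omega)) (by omega) (by omega) (by rw [hgt]; omega)
  have hmem : u - (vPos n γ i - 1) ∈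
      {l : ℕ | 1 ≤ l ∧ γ (vPos n γ i - 1 + l) = hgt n γ i - 1} :=
    ⟨by omega, by rwa [Nat.add_sub_cancel' (by omega)]⟩
  exact Nat.notMem_of_lt_sInf (by unfold excLen at ht; omega) hmem

theorem two_mul_perm231 (hγ : IsDyckPathFn n γ) {i : ℕ} (hi : i ∈ Icc 1 n) :
    2 * perm231 n γ i = vPos n γ i + excLen n γ i - hgt n γ i := by
  have hv1 := (mem_Icc.1 (hγ.vPos_mem_Icc hi)).1
  have hh := hγ.hgt_eq hi
  obtain ⟨-, hl2, hγl⟩ := hγ.excLen_spec hi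
  have hstart := hγ.two_mul_count_upSteps (x := vPos n γ i - 1) (by omega)
  have hend := hγ.two_mul_count_upSteps hl2
  have heven : 2 * (excLen n γ i / 2) = excLen n γ i := by
    push_cast [Nat.cast_sub hv1] at hstart hend
    omega
  have := hγ.two_mul_eq_vPos_add_hgt hi
  unfold perm231
  omega

end IsDyckPathFn

/-- If `i < j` and the `j`-th excursion of `γ` is contained in the `i`-th
excursion then `σ_γ j < σ_γ i`; if the two excursions are disjoint then
`σ_γ i < σ_γ j`. -/
theorem perm231_excursion_order (n : ℕ) (γ : ℕ → ℤ) (hγ : IsDyckPathFn n γ)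
    (i j : ℕ) (hi : i ∈ Finset.Icc 1 n) (hj : j ∈ Finset.Icc 1 n) (hij : i < j) :
    ((vPos n γ i - 1 ≤ vPos n γ j - 1 ∧
        vPos n γ j - 1 + excLen n γ j ≤ vPos n γ i - 1 + excLen n γ i) →
      perm231 n γ j < perm231 n γ i) ∧
    ((vPos n γ i - 1 + excLen n γ i < vPos n γ j - 1) →
      perm231 n γ i < perm231 n γ j) := by
  have hvij := hγ.vPos_lt_vPos hi hj hij
  have hvi := (mem_Icc.1 (hγ.vPos_mem_Icc hi)).1
  obtain ⟨hvj, hvj2⟩ := mem_Icc.1 (hγ.vPos_mem_Icc hj)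
  have hhj := hγ.hgt_eq hj
  obtain ⟨-, hendi, hγi⟩ := hγ.excLen_spec hi
  have hlj := (hγ.excLen_spec hj).1
  have hσi := hγ.two_mul_perm231 hi
  have hσj := hγ.two_mul_perm231 hj
  constructor
  · rintro ⟨-, hnested⟩
    -- the `j`-th excursion starts strictly inside the `i`-th, hence above its base level
    have habove := hγ.hgt_le_of_lt_excLen hi (t := vPos n γ j - vPos n γ i) (by omega) (by omega)
    rw [show vPos n γ i - 1 + (vPos n γ j - vPos n γ i) = vPos n γ j - 1 by omega] at habove
    omega
  · intro hdisjoint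
    have hclimb := le_add_of_up_steps_le_one (γ := γ)
      (fun k _ hk => hγ.succ_le_add_one (by omega)) hdisjoint.le
    omega
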